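/- Let H, φ be differentiable distortion functions with positive derivatives such that φ ∘ H⁻¹ is concave (φ is less convex than H). If ∫_0^u Q_X(t) dH(t) ≥ ∫_0^u Q_Y(t) dH(t) for all u ∈ [0,1], then ∫_0^1 Q_X(t) dφ(t) ≥ ∫_0^1 Q_Y(t) dφ(t). -/

import Mathlib

/-!
Put `w = φ' / H'`. Concavity of `φ ∘ H⁻¹` says that the secant slopes
`(φ y - φ x) / (H y - H x)` decrease in each endpoint; shrinking the secant to a point shows that
`w` is nonincreasing on `[0, 1]`. The claim is `∫₀¹ f w ≥ 0` for `f = (Q_X - Q_Y) H'`, whose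
partial integrals `∫₀ᵘ f` are nonnegative by hypothesis. This is a continuous Abel summation:
by the layer-cake formula `∫ f (w - w 1) = ∫₀^M ∫_{w - w 1 > r} f dr`, and every superlevel set of
the antitone `w` is, up to a null set, an initial segment `(0, c]`.
-/

open Set intervalIntegral MeasureTheory Filter Topology

theorem tendsto_slope_div_slope {f g : ℝ → ℝ} {f' g' x : ℝ} (hf : HasDerivAt f f' x)
    (hg : HasDerivAt g g' x) (hg' : g' ≠ 0) :
    Tendsto (fun t => slope f x t / slope g x t) (𝓝[≠] x) (𝓝 (f' / g')) :=
  (hasDerivAt_iff_tendsto_slope.1 hf).div (hasDerivAt_iff_tendsto_slope.1 hg) hg'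

theorem slope_div_slope_eq_slope_comp {g H φ : ℝ → ℝ} {x t : ℝ} (hxt : t ≠ x)
    (hx : φ x = g (H x)) (ht : φ t = g (H t)) :
    slope φ x t / slope H x t = slope g (H x) (H t) := by
  rw [slope_def_field, slope_def_field, slope_def_field,
    div_div_div_cancel_right₀ (sub_ne_zero.2 hxt), hx, ht]

section RelativeConcavity

variable {s T : Set ℝ} {g H φ : ℝ → ℝ} {x y φ' H' : ℝ}

theorem slope_comp_le_div_of_hasDerivAt (hH : StrictMonoOn H s) (hHT : MapsTo H s T)
    (hg : ConcaveOn ℝ T g) (hφ : EqOn φ (g ∘ H) s) (hs : Icc x y ⊆ s) (hxy : x < y)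
    (hφx : HasDerivAt φ φ' x) (hHx : HasDerivAt H H' x) (hH' : H' ≠ 0) :
    slope g (H x) (H y) ≤ φ' / H' := by
  have hx : x ∈ s := hs (left_mem_Icc.2 hxy.le)
  have hy : y ∈ s := hs (right_mem_Icc.2 hxy.le)
  refine ge_of_tendsto ((tendsto_slope_div_slope hφx hHx hH').mono_left
    (nhdsWithin_mono x fun _ ht => ne_of_gt ht : 𝓝[>] x ≤ 𝓝[≠] x)) ?_
  filter_upwards [Ioo_mem_nhdsGT hxy] with t ht
  have hts : t ∈ s := hs (Ioo_subset_Icc_self ht)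
  rw [slope_div_slope_eq_slope_comp ht.1.ne' (hφ hx) (hφ hts)]
  exact hg.slope_anti (hHT hx) ⟨hHT hts, (hH hx hts ht.1).ne'⟩ ⟨hHT hy, (hH hx hy hxy).ne'⟩
    (hH.monotoneOn hts hy ht.2.le)

theorem div_le_slope_comp_of_hasDerivAt (hH : StrictMonoOn H s) (hHT : MapsTo H s T)
    (hg : ConcaveOn ℝ T g) (hφ : EqOn φ (g ∘ H) s) (hs : Icc x y ⊆ s) (hxy : x < y)
    (hφy : HasDerivAt φ φ' y) (hHy : HasDerivAt H H' y) (hH' : H' ≠ 0) :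
    φ' / H' ≤ slope g (H x) (H y) := by
  have hx : x ∈ s := hs (left_mem_Icc.2 hxy.le)
  have hy : y ∈ s := hs (right_mem_Icc.2 hxy.le)
  refine le_of_tendsto ((tendsto_slope_div_slope hφy hHy hH').mono_left
    (nhdsWithin_mono y fun _ ht => ne_of_lt ht : 𝓝[<] y ≤ 𝓝[≠] y)) ?_
  filter_upwards [Ioo_mem_nhdsLT hxy] with t ht
  have hts : t ∈ s := hs (Ioo_subset_Icc_self ht)
  rw [slope_div_slope_eq_slope_comp ht.2.ne (hφ hy) (hφ hts), slope_comm g (H x)]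
  exact hg.slope_anti (hHT hy) ⟨hHT hx, (hH hx hy hxy).ne⟩ ⟨hHT hts, (hH hts hy ht.2).ne⟩
    (hH.monotoneOn hx hts ht.1.le)

theorem antitoneOn_deriv_div_deriv_of_concaveOn (hs : s.OrdConnected) (hH : StrictMonoOn H s)
    (hHT : MapsTo H s T) (hg : ConcaveOn ℝ T g) (hφ : EqOn φ (g ∘ H) s)
    (hφd : ∀ x ∈ s, DifferentiableAt ℝ φ x) (hHd : ∀ x ∈ s, DifferentiableAt ℝ H x)
    (hH' : ∀ x ∈ s, deriv H x ≠ 0) :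
    AntitoneOn (fun x => deriv φ x / deriv H x) s := by
  intro x hx y hy hxy
  rcases hxy.eq_or_lt with rfl | hlt
  · rfl
  exact (div_le_slope_comp_of_hasDerivAt hH hHT hg hφ (hs.out hx hy) hlt (hφd y hy).hasDerivAt
    (hHd y hy).hasDerivAt (hH' y hy)).trans
    (slope_comp_le_div_of_hasDerivAt hH hHT hg hφ (hs.out hx hy) hlt (hφd x hx).hasDerivAt
      (hHd x hx).hasDerivAt (hH' x hx))

end RelativeConcavity

theorem integral_mul_eq_integral_setIntegral_lt {α : Type*} [MeasurableSpace α] {μ : Measure α}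
    [SFinite μ] {f v : α → ℝ} {M : ℝ} (hf : Integrable f μ) (hv : Measurable v)
    (hvM : ∀ᵐ x ∂μ, 0 ≤ v x ∧ v x ≤ M) :
    ∫ x, f x * v x ∂μ = ∫ r in Ioc 0 M, ∫ x in {x | r < v x}, f x ∂μ := by
  set F : α × ℝ → ℝ := {p : α × ℝ | p.2 < v p.1}.indicator fun p => f p.1
  have hF : Integrable F (μ.prod (volume.restrict (Ioc 0 M))) :=
    (hf.comp_fst _).indicator (measurableSet_lt measurable_snd (hv.comp measurable_fst))
  have hinner : ∀ᵐ x ∂μ, ∫ r in Ioc 0 M, F (x, r) = f x * v x := by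
    filter_upwards [hvM] with x ⟨hv0, hvM⟩
    have hset : Iio (v x) ∩ Ioc 0 M = Ioo 0 (v x) := by
      ext r
      simp only [mem_inter_iff, mem_Ioc, mem_Iio, mem_Ioo]
      grind
    change ∫ r in Ioc 0 M, (Iio (v x)).indicator (fun _ => f x) r = _
    rw [MeasureTheory.integral_indicator measurableSet_Iio,
      Measure.restrict_restrict measurableSet_Iio, hset, setIntegral_const,
      Real.volume_real_Ioo_of_le hv0, sub_zero, smul_eq_mul, mul_comm]
  rw [← integral_congr_ae hinner, integral_integral_swap (f := fun x r => F (x, r)) hF]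
  refine integral_congr_ae (ae_of_all _ fun r => ?_)
  change _ = ∫ x in {x | r < v x}, f x ∂μ
  rw [← MeasureTheory.integral_indicator (measurableSet_lt measurable_const hv)]
  rfl

theorem setIntegral_inter_Ioc_nonneg_of_isLowerSet {f : ℝ → ℝ} {a b : ℝ} {S : Set ℝ}
    (hab : a ≤ b) (hS : IsLowerSet S) (hF : ∀ u ∈ Icc a b, 0 ≤ ∫ t in a..u, f t) :
    0 ≤ ∫ t in S ∩ Ioc a b, f t := by
  set A := insert a (S ∩ Ioc a b)
  have hA : BddAbove A := ⟨b, by rintro x (rfl | ⟨-, hx⟩) <;> [exact hab; exact hx.2]⟩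
  set c := sSup A
  have hac : a ≤ c := le_csSup hA (mem_insert _ _)
  have hcb : c ≤ b := csSup_le (insert_nonempty _ _) <| by
    rintro x (rfl | ⟨-, hx⟩) <;> [exact hab; exact hx.2]
  have hlower : Ioo a c ⊆ S ∩ Ioc a b := by
    intro t ⟨hat, htc⟩
    obtain ⟨u, hu | ⟨huS, hu⟩, htu⟩ := exists_lt_of_lt_csSup (insert_nonempty _ _) htc
    · exact absurd (hu ▸ htu) hat.not_gt
    · exact ⟨hS htu.le huS, hat, htu.le.trans hu.2⟩
  have hupper : S ∩ Ioc a b ⊆ Ioc a c := fun t ht => ⟨ht.2.1, le_csSup hA (mem_insert_of_mem _ ht)⟩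
  have hae : (S ∩ Ioc a b : Set ℝ) =ᵐ[volume] (Ioc a c : Set ℝ) :=
    hupper.eventuallyLE.antisymm (Ioo_ae_eq_Ioc.symm.trans_le hlower.eventuallyLE)
  rw [setIntegral_congr_set hae, ← integral_of_le hac]
  exact hF c ⟨hac, hcb⟩

theorem integral_mul_nonneg_of_antitoneOn {f w : ℝ → ℝ} {a b : ℝ} (hab : a ≤ b)
    (hf : IntervalIntegrable f volume a b) (hw : AntitoneOn w (Icc a b)) (hwb : 0 ≤ w b)
    (hF : ∀ u ∈ Icc a b, 0 ≤ ∫ t in a..u, f t) :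
    0 ≤ ∫ t in a..b, f t * w t := by
  -- extending `w` by constants outside `[a, b]` makes `v` globally antitone, hence measurable
  set v : ℝ → ℝ := fun t => IccExtend hab (fun x : Icc a b => w x) t - w b
  have hv : Antitone v := fun x y hxy =>
    sub_le_sub_right (hw (projIcc a b hab x).2 (projIcc a b hab y).2 (monotone_projIcc hab hxy)) _
  have hv_eq : ∀ t ∈ Icc a b, v t = w t - w b := fun t ht => by
    simp only [v, IccExtend_of_mem hab _ ht]
  have hv_bound : ∀ᵐ t ∂volume.restrict (Ioc a b), 0 ≤ v t ∧ v t ≤ w a - w b := by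
    filter_upwards [ae_restrict_mem measurableSet_Ioc] with t ht
    have ht' := Ioc_subset_Icc_self ht
    rw [hv_eq t ht']
    exact ⟨sub_nonneg.2 (hw ht' (right_mem_Icc.2 hab) ht'.2),
      sub_le_sub_right (hw (left_mem_Icc.2 hab) ht' ht'.1) _⟩
  have hfv : IntegrableOn (fun t => f t * v t) (Ioc a b) := by
    refine hf.1.mul_bdd hv.measurable.aestronglyMeasurable (c := w a - w b) ?_
    filter_upwards [hv_bound] with t ht
    rw [Real.norm_of_nonneg ht.1]
    exact ht.2
  have hsplit : ∀ t ∈ Ioc a b, f t * w t = f t * v t + w b * f t := fun t ht => by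
    rw [hv_eq t (Ioc_subset_Icc_self ht)]; ring
  have hfv_nonneg : 0 ≤ ∫ t in Ioc a b, f t * v t := by
    rw [integral_mul_eq_integral_setIntegral_lt hf.1 hv.measurable hv_bound]
    refine setIntegral_nonneg measurableSet_Ioc fun r _ => ?_
    rw [Measure.restrict_restrict (measurableSet_lt measurable_const hv.measurable)]
    exact setIntegral_inter_Ioc_nonneg_of_isLowerSet hab
      (fun x y hxy hy => lt_of_lt_of_le hy (hv hxy)) hF
  have hFb := hF b (right_mem_Icc.2 hab)
  rw [integral_of_le hab] at hFb ⊢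
  rw [setIntegral_congr_fun measurableSet_Ioc hsplit, integral_add hfv (hf.1.const_mul _),
    MeasureTheory.integral_const_mul]
  exact add_nonneg hfv_nonneg (mul_nonneg hwb hFb)

theorem MonotoneOn.intervalIntegrable_mul {Q g : ℝ → ℝ} {a b : ℝ} (hab : a ≤ b)
    (hQ : MonotoneOn Q (Icc a b)) (hg : IntervalIntegrable g volume a b) :
    IntervalIntegrable (fun t => Q t * g t) volume a b := by
  rw [intervalIntegrable_iff_integrableOn_Icc_of_le hab] at hg ⊢
  refine hg.bdd_mul (hQ.integrableOn_isCompact isCompact_Icc).aestronglyMeasurable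
    (c := max |Q a| |Q b|) ?_
  filter_upwards [ae_restrict_mem measurableSet_Icc] with t ht
  exact abs_le_max_abs_abs (hQ.mapsTo_Icc ht).1 (hQ.mapsTo_Icc ht).2

theorem intervalIntegrable_deriv_of_differentiable {f : ℝ → ℝ} {a b : ℝ} (hab : a ≤ b)
    (hf : Differentiable ℝ f) (hpos : ∀ t ∈ Ioo a b, 0 ≤ deriv f t) :
    IntervalIntegrable (deriv f) volume a b :=
  intervalIntegrable_deriv_of_nonneg hf.continuous.continuousOn (fun x _ => (hf x).hasDerivAt)
    (by simpa [hab] using hpos)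

theorem stmt_16_general (H φ Hinv : ℝ → ℝ)
    (hHdiff : Differentiable ℝ H) (hφdiff : Differentiable ℝ φ)
    (hH0 : H 0 = 0) (hH1 : H 1 = 1)
    (hH' : ∀ t ∈ Icc (0:ℝ) 1, 0 < deriv H t) (hφ' : ∀ t ∈ Icc (0:ℝ) 1, 0 < deriv φ t)
    (hinv₂ : ∀ t ∈ Icc (0:ℝ) 1, Hinv (H t) = t)
    (hconc : ConcaveOn ℝ (Icc 0 1) (φ ∘ Hinv))
    (QX QY : ℝ → ℝ) (hQX : MonotoneOn QX (Icc 0 1)) (hQY : MonotoneOn QY (Icc 0 1))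
    (hdom : ∀ u ∈ Icc (0:ℝ) 1,
      ∫ t in (0:ℝ)..u, QX t * deriv H t ≥ ∫ t in (0:ℝ)..u, QY t * deriv H t) :
    ∫ t in (0:ℝ)..1, QX t * deriv φ t ≥ ∫ t in (0:ℝ)..1, QY t * deriv φ t := by
  have hHmono : StrictMonoOn H (Icc 0 1) := strictMonoOn_of_deriv_pos (convex_Icc 0 1)
    hHdiff.continuous.continuousOn fun x hx => hH' x (interior_subset hx)
  have hw : AntitoneOn (fun t => deriv φ t / deriv H t) (Icc 0 1) := by
    refine antitoneOn_deriv_div_deriv_of_concaveOn ordConnected_Icc hHmono ?_ hconc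
      (fun t ht => by simp [hinv₂ t ht]) (fun t _ => hφdiff t) (fun t _ => hHdiff t)
      fun t ht => (hH' t ht).ne'
    simpa [hH0, hH1] using hHmono.monotoneOn.mapsTo_Icc
  have hHint := intervalIntegrable_deriv_of_differentiable zero_le_one hHdiff
    fun t ht => (hH' t (Ioo_subset_Icc_self ht)).le
  have hφint := intervalIntegrable_deriv_of_differentiable zero_le_one hφdiff
    fun t ht => (hφ' t (Ioo_subset_Icc_self ht)).le
  have hXH := hQX.intervalIntegrable_mul zero_le_one hHint
  have hYH := hQY.intervalIntegrable_mul zero_le_one hHint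
  have hF : ∀ u ∈ Icc (0:ℝ) 1, 0 ≤ ∫ t in (0:ℝ)..u, QX t * deriv H t - QY t * deriv H t := by
    intro u hu
    have hsub : uIcc 0 u ⊆ uIcc (0:ℝ) 1 := uIcc_subset_uIcc_left (Icc_subset_uIcc hu)
    rw [integral_sub (hXH.mono_set hsub) (hYH.mono_set hsub)]
    exact sub_nonneg.2 (hdom u hu)
  have h1 : (1:ℝ) ∈ Icc 0 1 := right_mem_Icc.2 zero_le_one
  have hpos := integral_mul_nonneg_of_antitoneOn zero_le_one (hXH.sub hYH) hw
    (div_nonneg (hφ' 1 h1).le (hH' 1 h1).le) hF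
  rw [ge_iff_le, ← sub_nonneg, ← integral_sub (hQX.intervalIntegrable_mul zero_le_one hφint)
    (hQY.intervalIntegrable_mul zero_le_one hφint)]
  refine hpos.trans_eq (integral_congr fun t ht => ?_)
  have : deriv H t ≠ 0 := (hH' t (by simpa using ht)).ne'
  field_simp

/-- If `φ` is less convex than `H` (i.e. `φ ∘ H⁻¹` is concave), then the distorted
expectation with weight `dφ` preserves `H`-distorted stochastic dominance. -/
theorem stmt_16 (H φ Hinv : ℝ → ℝ)
    (hHdiff : Differentiable ℝ H) (hφdiff : Differentiable ℝ φ)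
    (hH0 : H 0 = 0) (hH1 : H 1 = 1) (hφ0 : φ 0 = 0) (hφ1 : φ 1 = 1)
    (hH' : ∀ t ∈ Icc (0:ℝ) 1, 0 < deriv H t) (hφ' : ∀ t ∈ Icc (0:ℝ) 1, 0 < deriv φ t)
    (hinv₁ : ∀ t ∈ Icc (0:ℝ) 1, H (Hinv t) = t)
    (hinv₂ : ∀ t ∈ Icc (0:ℝ) 1, Hinv (H t) = t)
    (hinv_maps : MapsTo Hinv (Icc 0 1) (Icc 0 1))
    (hconc : ConcaveOn ℝ (Icc 0 1) (φ ∘ Hinv))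
    (QX QY : ℝ → ℝ) (hQX : MonotoneOn QX (Icc 0 1)) (hQY : MonotoneOn QY (Icc 0 1))
    (hQXint : IntervalIntegrable QX MeasureTheory.volume 0 1)
    (hQYint : IntervalIntegrable QY MeasureTheory.volume 0 1)
    (hdom : ∀ u ∈ Icc (0:ℝ) 1,
      ∫ t in (0:ℝ)..u, QX t * deriv H t ≥ ∫ t in (0:ℝ)..u, QY t * deriv H t) :
    ∫ t in (0:ℝ)..1, QX t * deriv φ t ≥ ∫ t in (0:ℝ)..1, QY t * deriv φ t :=
  stmt_16_general H φ Hinv hHdiff hφdiff hH0 hH1 hH' hφ' hinv₂ hconc QX QY hQX hQY hdom
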